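/- arXiv:0910.1131 — 4 statements merged into one kernel-verified Lean document; each statement's English description precedes it below -/
import Mathlib

section
/- Let X be a metric space equipped with a Borel measure μ (opens are measurable), let K ⊆ X be a measurable connected subset, let f : X → ℝ be a 1-Lipschitz function, and let A ∈ ℝ, C₀ > 0, C₅ > 0, r₀ > 0 be constants. Assume: (i) there exists a ∈ K with f(a) ≤ A; (ii) μ(K) ≤ C₀; and (iii) for every x ∈ K, μ(K ∩ B(x, r₀)) ≥ C₅·r₀², where B(x, r₀) is the open ball. Then for every y ∈ K, f(y) ≤ A + 2C₀/(C₅·r₀) + 2r₀. -/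
/-!
If `f` exceeds `A` by much on `K`, connectedness lets `f|K` take the `n + 1` values
`f a, f a + 2r₀, …, f a + 2n r₀`; since `f` is `1`-Lipschitz, the `r₀`-balls around points
realising them are pairwise disjoint, so `K` has measure at least `(n + 1) C₅ r₀²`.
The bound `μ K ≤ C₀` therefore caps `n`, and with it the oscillation of `f` on `K`.
-/

open MeasureTheory Metric Set Function

theorem LipschitzWith.disjoint_ball_ball {X Y : Type*} [PseudoMetricSpace X]
    [PseudoMetricSpace Y] {f : X → Y} (hf : LipschitzWith 1 f) {x y : X} {δ ε : ℝ}
    (h : δ + ε ≤ dist (f x) (f y)) : Disjoint (ball x δ) (ball y ε) :=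
  ball_disjoint_ball <| h.trans <| by simpa using hf.dist_le_mul x y

theorem le_dist_add_natCast_mul {b d : ℝ} (hd : 0 ≤ d) {i j : ℕ} (hij : i ≠ j) :
    d ≤ dist (b + i * d) (b + j * d) := by
  have hone : (1 : ℝ) ≤ |(i : ℝ) - j| := by
    rcases hij.lt_or_gt with h | h
    · have : (i : ℝ) + 1 ≤ j := by exact_mod_cast h
      exact le_abs.mpr (Or.inr (by linarith))
    · have : (j : ℝ) + 1 ≤ i := by exact_mod_cast h
      exact le_abs.mpr (Or.inl (by linarith))
  rw [Real.dist_eq, show b + i * d - (b + j * d) = ((i : ℝ) - j) * d by ring, abs_mul,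
    abs_of_nonneg hd]
  exact le_mul_of_one_le_left hd hone

theorem IsPreconnected.exists_fin_arithmetic_levels {X : Type*} [TopologicalSpace X] {K : Set X}
    (hK : IsPreconnected K) {f : X → ℝ} (hf : ContinuousOn f K) {a y : X} (ha : a ∈ K)
    (hy : y ∈ K) {d : ℝ} (hd : 0 ≤ d) {n : ℕ} (hn : n * d ≤ f y - f a) :
    ∃ x : Fin (n + 1) → X, ∀ i, x i ∈ K ∧ f (x i) = f a + i * d := by
  have hlevel (i : Fin (n + 1)) : ∃ x ∈ K, f x = f a + i * d := by
    have hi : (i : ℝ) * d ≤ n * d := by gcongr; exact_mod_cast Nat.lt_succ_iff.mp i.2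
    exact hK.intermediate_value ha hy hf ⟨by nlinarith [i.1.cast_nonneg (α := ℝ)], by linarith⟩
  choose x hxK hfx using hlevel
  exact ⟨x, fun i => ⟨hxK i, hfx i⟩⟩

theorem IsPreconnected.succ_mul_le_measure {X : Type*} [PseudoMetricSpace X]
    [MeasurableSpace X] [OpensMeasurableSpace X] {μ : Measure X} {K : Set X}
    (hK : IsPreconnected K) {f : X → ℝ} (hf : LipschitzWith 1 f) {r : ℝ} (hr : 0 ≤ r)
    {c : ENNReal} (hball : ∀ x ∈ K, c ≤ μ (K ∩ ball x r)) {a y : X} (ha : a ∈ K) (hy : y ∈ K)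
    {n : ℕ} (hn : n * (2 * r) ≤ f y - f a) : (n + 1) * c ≤ μ K := by
  obtain ⟨x, hx⟩ :=
    hK.exists_fin_arithmetic_levels hf.continuous.continuousOn ha hy (by positivity) hn
  have hdisj : Pairwise (Disjoint on fun i => ball (x i) r) := fun i j hij =>
    hf.disjoint_ball_ball (x := x i) (y := x j) <| by
      rw [(hx i).2, (hx j).2, ← two_mul]
      exact le_dist_add_natCast_mul (by positivity) (Fin.val_injective.ne hij)
  calc (n + 1) * c = ∑ _i : Fin (n + 1), c := by simp
    _ ≤ ∑ i, μ.restrict K (ball (x i) r) := by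
      gcongr with i
      rw [Measure.restrict_apply measurableSet_ball, inter_comm]
      exact hball _ (hx i).1
    _ ≤ μ.restrict K univ :=
      sum_measure_le_measure_univ (fun i _ => measurableSet_ball.nullMeasurableSet)
        (fun i _ j _ hij => (hdisj hij).aedisjoint)
    _ = μ K := Measure.restrict_apply_univ K

theorem c0_bound_of_monotonicity_general {X : Type*} [MetricSpace X] [MeasurableSpace X]
    [OpensMeasurableSpace X] (μ : Measure X)
    (K : Set X) (hKc : IsConnected K)
    (f : X → ℝ) (hf : LipschitzWith 1 f)
    (A C₀ C₅ r₀ : ℝ) (hC₀ : 0 < C₀) (hC₅ : 0 < C₅) (hr₀ : 0 < r₀)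
    (ha : ∃ a ∈ K, f a ≤ A)
    (hμK : μ K ≤ ENNReal.ofReal C₀)
    (hball : ∀ x ∈ K, ENNReal.ofReal (C₅ * r₀ ^ 2) ≤ μ (K ∩ ball x r₀)) :
    ∀ y ∈ K, f y ≤ A + 2 * C₀ / (C₅ * r₀) + 2 * r₀ := by
  intro y hy
  obtain ⟨a, haK, hfa⟩ := ha
  by_contra! hy_large
  set t := C₀ / (C₅ * r₀ ^ 2)
  set n := ⌊t⌋₊
  have hn : n * (2 * r₀) ≤ f y - f a := calc
    n * (2 * r₀) ≤ t * (2 * r₀) := by gcongr; exact Nat.floor_le (by positivity)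
    _ = 2 * C₀ / (C₅ * r₀) := by simp only [t]; field_simp
    _ ≤ f y - f a := by linarith
  have hcount := (hKc.isPreconnected.succ_mul_le_measure hf hr₀.le hball haK hy hn).trans hμK
  have hreal : ((n : ℝ) + 1) * (C₅ * r₀ ^ 2) ≤ C₀ := by
    rw [← ENNReal.ofReal_le_ofReal_iff hC₀.le, ENNReal.ofReal_mul (by positivity)]
    simpa [ENNReal.ofReal_add] using hcount
  exact (Nat.lt_floor_add_one t).not_ge ((le_div_iff₀ (by positivity)).mpr hreal)

/-- Abstract `C⁰`-bound via the monotonicity argument: if `K` is a connected measurable set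
of measure at most `C₀`, the `1`-Lipschitz function `f` is `≤ A` somewhere on `K`, and every
ball of radius `r₀` centered on `K` captures measure at least `C₅ r₀²` from `K`, then
`f ≤ A + 2C₀/(C₅ r₀) + 2r₀` on all of `K`. -/
theorem c0_bound_of_monotonicity {X : Type*} [MetricSpace X] [MeasurableSpace X]
    [OpensMeasurableSpace X] (μ : Measure X)
    (K : Set X) (hKm : MeasurableSet K) (hKc : IsConnected K)
    (f : X → ℝ) (hf : LipschitzWith 1 f)
    (A C₀ C₅ r₀ : ℝ) (hC₀ : 0 < C₀) (hC₅ : 0 < C₅) (hr₀ : 0 < r₀)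
    (ha : ∃ a ∈ K, f a ≤ A)
    (hμK : μ K ≤ ENNReal.ofReal C₀)
    (hball : ∀ x ∈ K, ENNReal.ofReal (C₅ * r₀ ^ 2) ≤ μ (K ∩ ball x r₀)) :
    ∀ y ∈ K, f y ≤ A + 2 * C₀ / (C₅ * r₀) + 2 * r₀ :=
  c0_bound_of_monotonicity_general μ K hKc f hf A C₀ C₅ r₀ hC₀ hC₅ hr₀ ha hμK hball
end

section
/- Let X be a metric space, f : X → ℝ a 1-Lipschitz function, K ⊆ X a connected subset, a, b ∈ K, and A, B ∈ ℝ, r₀ > 0, m ∈ ℕ with f(a) ≤ A, B ≤ f(b), and A + 2·m·r₀ ≤ B. Then there exist points x₁, …, x_m ∈ K such that dist(x_i, x_j) ≥ 2r₀ whenever i ≠ j; in particular the open balls B(x_i, r₀) are pairwise disjoint. -/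
/-!
Pick the points on `K` at the levels `A + 2 r₀ i` of `f`, `i < m`, by the intermediate value
theorem on the connected set `K`. Distinct levels differ by at least `2 r₀`, and since `f` is
`1`-Lipschitz the chosen points are at least that far apart.
-/

open Metric

theorem IsPreconnected.exists_forall_mem_and_apply_eq {X α ι : Type*} [TopologicalSpace X]
    [LinearOrder α] [TopologicalSpace α] [OrderClosedTopology α] {K : Set X}
    (hK : IsPreconnected K) {f : X → α} (hf : ContinuousOn f K) {a b : X} (ha : a ∈ K)
    (hb : b ∈ K) {t : ι → α} (ht : ∀ i, t i ∈ Set.Icc (f a) (f b)) :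
    ∃ x : ι → X, ∀ i, x i ∈ K ∧ f (x i) = t i := by
  choose x hx using fun i => hK.intermediate_value ha hb hf (ht i)
  exact ⟨x, hx⟩

theorem le_abs_add_mul_natCast_sub_add_mul_natCast {r : ℝ} (hr : 0 ≤ r) (A : ℝ) {i j : ℕ}
    (hij : i ≠ j) : r ≤ |(A + r * i) - (A + r * j)| := by
  have hone : (1 : ℝ) ≤ |(i : ℝ) - j| := by
    exact_mod_cast Int.one_le_abs (sub_ne_zero.mpr (Int.natCast_inj.not.mpr hij))
  calc r = r * 1 := (mul_one r).symm
    _ ≤ r * |(i : ℝ) - j| := mul_le_mul_of_nonneg_left hone hr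
    _ = |(A + r * i) - (A + r * j)| := by
      rw [show A + r * i - (A + r * j) = r * (i - j) by ring, abs_mul, abs_of_nonneg hr]

theorem LipschitzWith.abs_sub_le_dist {X : Type*} [PseudoMetricSpace X] {f : X → ℝ}
    (hf : LipschitzWith 1 f) (x y : X) : |f x - f y| ≤ dist x y := by
  simpa [Real.dist_eq] using hf.dist_le_mul x y

/-- Disjoint-ball counting: if a connected set `K` carries a `1`-Lipschitz function with
values crossing from `≤ A` to `≥ B` with `A + 2·m·r₀ ≤ B`, then one can find `m` points of
`K` pairwise at distance at least `2r₀`; in particular the balls `B(xᵢ, r₀)` are pairwise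
disjoint. -/
theorem exists_separated_points_of_crossing {X : Type*} [MetricSpace X]
    (f : X → ℝ) (hf : LipschitzWith 1 f)
    (K : Set X) (hK : IsPreconnected K)
    (a b : X) (ha : a ∈ K) (hb : b ∈ K)
    (A B r₀ : ℝ) (hr₀ : 0 < r₀) (m : ℕ)
    (hfa : f a ≤ A) (hfb : B ≤ f b) (hAB : A + 2 * (m : ℝ) * r₀ ≤ B) :
    ∃ x : Fin m → X, (∀ i, x i ∈ K) ∧
      (∀ i j, i ≠ j → 2 * r₀ ≤ dist (x i) (x j)) ∧
      (∀ i j, i ≠ j → Disjoint (ball (x i) r₀) (ball (x j) r₀)) := by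
  have hlevel : ∀ i : Fin m, A + 2 * r₀ * i ∈ Set.Icc (f a) (f b) := fun i => by
    have hi : (i : ℝ) ≤ m := by exact_mod_cast i.is_lt.le
    constructor <;> nlinarith [(Nat.cast_nonneg i : (0 : ℝ) ≤ i)]
  obtain ⟨x, hx⟩ := hK.exists_forall_mem_and_apply_eq hf.continuous.continuousOn ha hb hlevel
  have hsep : ∀ i j, i ≠ j → 2 * r₀ ≤ dist (x i) (x j) := fun i j hij =>
    calc 2 * r₀ ≤ |f (x i) - f (x j)| := by
          rw [(hx i).2, (hx j).2]
          exact le_abs_add_mul_natCast_sub_add_mul_natCast (by positivity) A (Fin.val_ne_of_ne hij)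
      _ ≤ dist (x i) (x j) := hf.abs_sub_le_dist _ _
  refine ⟨x, fun i => (hx i).1, hsep, fun i j hij => ball_disjoint_ball ?_⟩
  linarith [hsep i j hij]
end

section
/- Let E be a real normed vector space, u : ℂ → E a C¹ map (over ℝ), and 0 < r < 1. Suppose C ∈ ℝ satisfies ∫_{z : r ≤ ‖z‖ ≤ √r} ‖Du(z)‖² dA(z) ≤ C, where Du(z) is the Fréchet derivative of u at z, ‖Du(z)‖ its operator norm, and dA the Lebesgue (area) measure on ℂ. Then there exists ρ ∈ [r, √r] such that ∫_0^{2π} ‖Du(ρ·e^{iθ})(i·ρ·e^{iθ})‖ dθ ≤ √(4π·C / log(1/r)); that is, the length of the loop θ ↦ u(ρ e^{iθ}) is at most √(4πC / log(1/r)). -/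
/-!
By Cauchy–Schwarz, the loop length `ℓ(ρ)` of the circle of radius `ρ` satisfies
`ℓ(ρ)² / ρ ≤ 2π ρ ∫₀^{2π} ‖Du(ρe^{iθ})‖² dθ`. Integrating over `ρ ∈ [r, √r]` turns the right
side into `2π` times the energy on the annulus (polar coordinates), while the left side is at least
`min ℓ² · log(√r / r) = min ℓ² · log(1/r) / 2`.
-/

open MeasureTheory Real

theorem sq_integral_le_measureReal_univ_mul_integral_sq {α : Type*} [MeasurableSpace α]
    {μ : Measure α} [IsFiniteMeasure μ] {f : α → ℝ} (hf : Integrable f μ)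
    (hf2 : Integrable (fun x ↦ f x ^ 2) μ) :
    (∫ x, f x ∂μ) ^ 2 ≤ μ.real Set.univ * ∫ x, f x ^ 2 ∂μ := by
  set m := μ.real Set.univ
  set I := ∫ x, f x ∂μ
  rcases (measureReal_nonneg : 0 ≤ m).eq_or_lt with hm | hm
  · have hμ : μ = 0 := by
      simpa [m, measureReal_def, ENNReal.toReal_eq_zero_iff, measure_ne_top] using hm.symm
    simp [I, hμ]
  have hexpand : ∫ x, (m * f x - I) ^ 2 ∂μ = m * (m * ∫ x, f x ^ 2 ∂μ - I ^ 2) := by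
    have h : ∀ x, (m * f x - I) ^ 2 = m ^ 2 * f x ^ 2 - (2 * m * I * f x - I ^ 2) := fun x ↦ by
      ring
    simp_rw [h]
    rw [integral_sub, integral_sub, integral_const_mul, integral_const_mul, integral_const,
      smul_eq_mul]
    · ring
    all_goals fun_prop
  have h0 : 0 ≤ m * (m * ∫ x, f x ^ 2 ∂μ - I ^ 2) :=
    hexpand ▸ integral_nonneg fun x ↦ sq_nonneg _
  linarith [(mul_nonneg_iff_of_pos_left hm).1 h0]

theorem exists_mul_log_div_le_of_integral_div_le {g : ℝ → ℝ} {a b K : ℝ}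
    (hg : ContinuousOn g (Set.Icc a b)) (ha : 0 < a) (hab : a ≤ b)
    (hK : ∫ ρ in a..b, g ρ / ρ ≤ K) : ∃ ρ ∈ Set.Icc a b, g ρ * log (b / a) ≤ K := by
  obtain ⟨ρ₀, hρ₀, hmin⟩ := isCompact_Icc.exists_isMinOn (Set.nonempty_Icc.2 hab) hg
  have hpos : ∀ ρ ∈ Set.Icc a b, 0 < ρ := fun ρ hρ ↦ ha.trans_le hρ.1
  refine ⟨ρ₀, hρ₀, le_trans ?_ hK⟩
  calc g ρ₀ * log (b / a) = ∫ ρ in a..b, g ρ₀ / ρ := by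
        rw [← integral_inv_of_pos ha (ha.trans_le hab), ← intervalIntegral.integral_const_mul]
        simp only [div_eq_mul_inv]
      _ ≤ ∫ ρ in a..b, g ρ / ρ :=
        intervalIntegral.integral_mono_on hab
          (ContinuousOn.intervalIntegrable_of_Icc hab
            (continuousOn_const.div continuousOn_id fun ρ hρ ↦ (hpos ρ hρ).ne'))
          (ContinuousOn.intervalIntegrable_of_Icc hab
            (hg.div continuousOn_id fun ρ hρ ↦ (hpos ρ hρ).ne'))
          fun ρ hρ ↦ div_le_div_of_nonneg_right (hmin hρ) (hpos ρ hρ).le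

section PolarCoordinates

variable {F : Type*} [NormedAddCommGroup F] [NormedSpace ℝ F]

def closedAnnulus (a b : ℝ) : Set ℂ := {z | a ≤ ‖z‖ ∧ ‖z‖ ≤ b}

theorem measurableSet_closedAnnulus (a b : ℝ) : MeasurableSet (closedAnnulus a b) :=
  ((isClosed_le continuous_const continuous_norm).inter
    (isClosed_le continuous_norm continuous_const)).measurableSet

theorem polarCoord_symm_eq_circleMap (p : ℝ × ℝ) :
    Complex.polarCoord.symm p = circleMap 0 p.1 p.2 := by
  rw [Complex.polarCoord_symm_apply, circleMap_zero, Complex.exp_mul_I]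
  push_cast
  ring

theorem integral_Ioo_circleMap (f : ℂ → F) (ρ : ℝ) :
    ∫ θ in Set.Ioo (-π) π, f (circleMap 0 ρ θ) = ∫ θ in 0..2 * π, f (circleMap 0 ρ θ) := by
  have h := ((periodic_circleMap 0 ρ).comp f).intervalIntegral_add_eq (-π) 0
  rw [zero_add, show -π + 2 * π = π by ring] at h
  rw [← integral_Ioc_eq_integral_Ioo, ← intervalIntegral.integral_of_le (by linarith [pi_pos])]
  exact h

theorem setIntegral_closedAnnulus {f : ℂ → F} (hf : Continuous f) {a b : ℝ} (ha : 0 < a)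
    (hab : a ≤ b) :
    ∫ z in closedAnnulus a b, f z = ∫ ρ in a..b, ρ • ∫ θ in 0..2 * π, f (circleMap 0 ρ θ) := by
  set S := Set.Icc a b ×ˢ Set.Ioo (-π) π
  have hS : S ⊆ polarCoord.target := fun p hp ↦ ⟨ha.trans_le hp.1.1, hp.2⟩
  have hpre : ∀ p ∈ polarCoord.target,
      p.1 • (closedAnnulus a b).indicator f (Complex.polarCoord.symm p) =
        S.indicator (fun p ↦ p.1 • f (circleMap 0 p.1 p.2)) p := by
    rintro ⟨ρ, θ⟩ ⟨hρ, hθ⟩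
    have hmem : Complex.polarCoord.symm (ρ, θ) ∈ closedAnnulus a b ↔ (ρ, θ) ∈ S := by
      simp [closedAnnulus, S, abs_of_pos (Set.mem_Ioi.1 hρ), hθ]
    by_cases h : (ρ, θ) ∈ S
    · rw [Set.indicator_of_mem (hmem.2 h), Set.indicator_of_mem h, polarCoord_symm_eq_circleMap]
    · rw [Set.indicator_of_notMem (mt hmem.1 h), Set.indicator_of_notMem h, smul_zero]
  have hint : IntegrableOn (fun p : ℝ × ℝ ↦ p.1 • f (circleMap 0 p.1 p.2)) S
      (volume.prod volume) :=
    (ContinuousOn.integrableOn_compact (isCompact_Icc.prod isCompact_Icc) (by fun_prop)).mono_set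
      (Set.prod_mono le_rfl Set.Ioo_subset_Icc_self)
  calc ∫ z in closedAnnulus a b, f z
      = ∫ p in polarCoord.target,
          p.1 • (closedAnnulus a b).indicator f (Complex.polarCoord.symm p) := by
        rw [Complex.integral_comp_polarCoord_symm,
          integral_indicator (measurableSet_closedAnnulus a b)]
    _ = ∫ p in S, p.1 • f (circleMap 0 p.1 p.2) := by
        rw [setIntegral_congr_fun polarCoord.open_target.measurableSet hpre,
          setIntegral_indicator (measurableSet_Icc.prod measurableSet_Ioo),
          Set.inter_eq_self_of_subset_right hS]
    _ = ∫ ρ in Set.Icc a b, ∫ θ in Set.Ioo (-π) π, ρ • f (circleMap 0 ρ θ) := by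
        rw [Measure.volume_eq_prod]
        exact setIntegral_prod _ hint
    _ = ∫ ρ in a..b, ρ • ∫ θ in 0..2 * π, f (circleMap 0 ρ θ) := by
        rw [intervalIntegral.integral_of_le hab, ← integral_Icc_eq_integral_Ioc]
        simp_rw [integral_smul, integral_Ioo_circleMap]

end PolarCoordinates

section LoopLength

variable {E : Type*} [NormedAddCommGroup E] [NormedSpace ℝ E] {u : ℂ → E}

noncomputable def loopLength (u : ℂ → E) (ρ : ℝ) : ℝ :=
  ∫ θ in 0..2 * π, ‖fderiv ℝ u (circleMap 0 ρ θ) (Complex.I * circleMap 0 ρ θ)‖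

theorem continuous_loopLength (hu : Continuous (fderiv ℝ u)) : Continuous (loopLength u) :=
  intervalIntegral.continuous_parametric_intervalIntegral_of_continuous' (by fun_prop) _ _

theorem sq_loopLength_le (hu : Continuous (fderiv ℝ u)) (ρ : ℝ) :
    loopLength u ρ ^ 2 ≤
      2 * π * (ρ ^ 2 * ∫ θ in 0..2 * π, ‖fderiv ℝ u (circleMap 0 ρ θ)‖ ^ 2) := by
  have hle : ∀ θ, ‖fderiv ℝ u (circleMap 0 ρ θ) (Complex.I * circleMap 0 ρ θ)‖ ^ 2 ≤
      ρ ^ 2 * ‖fderiv ℝ u (circleMap 0 ρ θ)‖ ^ 2 := fun θ ↦ by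
    have h := (fderiv ℝ u (circleMap 0 ρ θ)).le_opNorm (Complex.I * circleMap 0 ρ θ)
    rw [norm_mul, Complex.norm_I, one_mul, norm_circleMap_zero] at h
    calc _ ≤ (‖fderiv ℝ u (circleMap 0 ρ θ)‖ * |ρ|) ^ 2 := by gcongr
      _ = _ := by rw [mul_pow, sq_abs, mul_comm]
  have h2π : (0 : ℝ) ≤ 2 * π := by positivity
  calc loopLength u ρ ^ 2
      ≤ 2 * π * ∫ θ in 0..2 * π,
          ‖fderiv ℝ u (circleMap 0 ρ θ) (Complex.I * circleMap 0 ρ θ)‖ ^ 2 := by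
        simp only [loopLength, intervalIntegral.integral_of_le h2π]
        convert sq_integral_le_measureReal_univ_mul_integral_sq
          (μ := volume.restrict (Set.Ioc 0 (2 * π))) ?_ ?_ using 2
        · rw [measureReal_restrict_apply_univ, volume_real_Ioc_of_le h2π, sub_zero]
        all_goals
          exact (Continuous.continuousOn (by fun_prop)).integrableOn_Icc.mono_set
            Set.Ioc_subset_Icc_self
    _ ≤ 2 * π * ∫ θ in 0..2 * π, ρ ^ 2 * ‖fderiv ℝ u (circleMap 0 ρ θ)‖ ^ 2 := by
        gcongr
        exact intervalIntegral.integral_mono_on h2π (Continuous.intervalIntegrable (by fun_prop) _ _)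
          (Continuous.intervalIntegrable (by fun_prop) _ _) fun θ _ ↦ hle θ
    _ = _ := by rw [intervalIntegral.integral_const_mul]

theorem integral_sq_loopLength_div_le (hu : Continuous (fderiv ℝ u)) {a b : ℝ} (ha : 0 < a)
    (hab : a ≤ b) :
    ∫ ρ in a..b, loopLength u ρ ^ 2 / ρ ≤
      2 * π * ∫ z in closedAnnulus a b, ‖fderiv ℝ u z‖ ^ 2 := by
  rw [setIntegral_closedAnnulus (by fun_prop) ha hab, ← intervalIntegral.integral_const_mul]
  refine intervalIntegral.integral_mono_on hab ?_ (Continuous.intervalIntegrable ?_ _ _)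
    fun ρ hρ ↦ ?_
  · exact ContinuousOn.intervalIntegrable_of_Icc hab
      (((continuous_loopLength hu).pow 2).continuousOn.div continuousOn_id
        fun ρ hρ ↦ (ha.trans_le hρ.1).ne')
  · exact continuous_const.mul (continuous_id.smul
      (intervalIntegral.continuous_parametric_intervalIntegral_of_continuous' (by fun_prop) _ _))
  · have hρ0 : 0 < ρ := ha.trans_le hρ.1
    rw [div_le_iff₀ hρ0, smul_eq_mul]
    linarith [sq_loopLength_le hu ρ]

end LoopLength

/-- Courant–Lebesgue lemma: if the Dirichlet energy of a `C¹` map `u : ℂ → E` on the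
annulus `{r ≤ |z| ≤ √r}` is at most `C`, then some intermediate circle `|z| = ρ` is mapped
to a loop of length at most `√(4πC / log(1/r))`. -/
theorem courant_lebesgue {E : Type*} [NormedAddCommGroup E] [NormedSpace ℝ E]
    (u : ℂ → E) (hu : ContDiff ℝ 1 u) (r : ℝ) (hr0 : 0 < r) (hr1 : r < 1)
    (C : ℝ)
    (hE : (∫ z in {z : ℂ | r ≤ ‖z‖ ∧ ‖z‖ ≤ Real.sqrt r}, ‖fderiv ℝ u z‖ ^ 2) ≤ C) :
    ∃ ρ ∈ Set.Icc r (Real.sqrt r),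
      (∫ θ in (0 : ℝ)..(2 * π),
          ‖fderiv ℝ u ((ρ : ℂ) * Complex.exp (θ * Complex.I))
              (Complex.I * ((ρ : ℂ) * Complex.exp (θ * Complex.I)))‖)
        ≤ Real.sqrt (4 * π * C / Real.log (1 / r)) := by
  have hDu : Continuous (fderiv ℝ u) := hu.continuous_fderiv one_ne_zero
  have hr : r ≤ √r := (Real.le_sqrt' hr0).2 (by nlinarith)
  have hlog : log (√r / r) = log (1 / r) / 2 := by
    rw [Real.log_div (by positivity) hr0.ne', Real.log_sqrt hr0.le, one_div, Real.log_inv]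
    ring
  obtain ⟨ρ, hρ, hℓ⟩ := exists_mul_log_div_le_of_integral_div_le (K := 2 * π * C)
    (g := fun ρ ↦ loopLength u ρ ^ 2) ((continuous_loopLength hDu).pow 2).continuousOn hr0 hr
    ((integral_sq_loopLength_div_le hDu hr0 hr).trans (by gcongr; exact hE))
  refine ⟨ρ, hρ, ?_⟩
  simp only [← circleMap_zero]
  change loopLength u ρ ≤ _
  rw [hlog] at hℓ
  refine Real.le_sqrt_of_sq_le ((le_div_iff₀ (Real.log_pos ((one_lt_div hr0).2 hr1))).2 ?_)
  linarith
end

section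
/- Let E be a real inner product space, 𝒜 : E → ℝ a differentiable function, ε ≥ 0 and w ∈ ℝ real numbers, and P : ℝ → E → E a map such that P(τ, x) = 0 whenever τ ∉ [0, 1], and ‖P(τ, x)‖ ≤ ε for all τ ∈ ℝ and x ∈ E. Let u : ℝ → E be a differentiable curve with continuous derivative u' satisfying the perturbed negative gradient flow equation: for every τ ∈ ℝ and v ∈ E, D𝒜(u(τ))(v) = ⟨P(τ, u(τ)) − u'(τ), v⟩. Suppose u(τ) → p⁻ as τ → −∞, u(τ) → p⁺ as τ → +∞, and 𝒜(p⁻) − 𝒜(p⁺) ≤ w. Then τ ↦ ‖u'(τ)‖² is integrable on ℝ and ∫_ℝ ‖u'(τ)‖² dτ ≤ (4/3)·(w + ε²). -/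
/-!
Along the flow, `g τ = 𝒜 (u τ)` has derivative `⟪P - u', u'⟫ ≤ ‖P‖² - (3/4)‖u'‖²`
(Cauchy–Schwarz and `‖P‖‖u'‖ ≤ ‖P‖² + ‖u'‖²/4`), and `‖P‖² ≤ ε² · 𝟙_[0,1]`. Comparing with
this integrable bound on every interval `[a, b]` gives `(3/4) ∫_a^b ‖u'‖² ≤ g a - g b + ε²`,
and letting `a → -∞`, `b → +∞` replaces `g a - g b` by `𝒜 p⁻ - 𝒜 p⁺ ≤ w`.
-/

open Filter MeasureTheory Set Topology

theorem real_inner_sub_self_le {E : Type*} [NormedAddCommGroup E] [InnerProductSpace ℝ E]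
    (p v : E) : inner ℝ (p - v) v ≤ ‖p‖ ^ 2 - 3 / 4 * ‖v‖ ^ 2 := by
  rw [inner_sub_left, real_inner_self_eq_norm_sq]
  nlinarith [real_inner_le_norm p v, sq_nonneg (‖p‖ - ‖v‖ / 2)]

theorem integrable_and_integral_le_of_intervalIntegral_le {q : ℝ → ℝ} {C : ℝ}
    (hq : LocallyIntegrable q) (hq0 : 0 ≤ q) (hC : ∀ a b, a ≤ b → ∫ τ in a..b, q τ ≤ C) :
    Integrable q ∧ ∫ τ, q τ ≤ C := by
  have hsymm (t : ℝ) (ht : 0 ≤ t) : ∫ τ in -t..t, q τ ≤ C := hC _ _ (by linarith)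
  have hIoc (t : ℝ) : IntegrableOn q (Ioc (-t) t) :=
    (hq.integrableOn_isCompact isCompact_Icc).mono_set Ioc_subset_Icc_self
  have hint : Integrable q := by
    refine integrable_of_intervalIntegral_norm_bounded C hIoc tendsto_neg_atTop_atBot tendsto_id
      ((eventually_ge_atTop 0).mono fun t ht => ?_)
    simpa only [Real.norm_of_nonneg (hq0 _)] using hsymm t ht
  exact ⟨hint, le_of_tendsto
    (intervalIntegral_tendsto_integral hint tendsto_neg_atTop_atBot tendsto_id)
    ((eventually_ge_atTop 0).mono hsymm)⟩

section DerivBound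

variable {g g' φ q : ℝ → ℝ}

theorem intervalIntegral_le_sub_add_integral_of_hasDerivAt_le
    (hg : ∀ τ, HasDerivAt g (g' τ) τ) (hφ : Integrable φ) (hφ0 : 0 ≤ φ)
    (hq : LocallyIntegrable q) (hle : ∀ τ, g' τ ≤ φ τ - q τ) {a b : ℝ} (hab : a ≤ b) :
    ∫ τ in a..b, q τ ≤ g a - g b + ∫ τ, φ τ := by
  have hcont : Continuous g := continuous_iff_continuousAt.2 fun τ => (hg τ).continuousAt
  have hφab : IntervalIntegrable φ volume a b := hφ.intervalIntegrable
  have hqab : IntervalIntegrable q volume a b :=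
    (hq.integrableOn_isCompact isCompact_uIcc).intervalIntegrable
  have hsub : g b - g a ≤ ∫ τ in a..b, (φ τ - q τ) :=
    intervalIntegral.sub_le_integral_of_hasDeriv_right_of_le hab hcont.continuousOn
      (fun τ _ => (hg τ).hasDerivWithinAt)
      (hφ.integrableOn.sub (hq.integrableOn_isCompact isCompact_Icc)) fun τ _ => hle τ
  have hφle : ∫ τ in a..b, φ τ ≤ ∫ τ, φ τ := by
    rw [intervalIntegral.integral_of_le hab]
    exact setIntegral_le_integral hφ (Eventually.of_forall hφ0)
  rw [intervalIntegral.integral_sub hφab hqab] at hsub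
  linarith

theorem integrable_and_integral_le_of_hasDerivAt_le {A B : ℝ}
    (hg : ∀ τ, HasDerivAt g (g' τ) τ) (hφ : Integrable φ) (hφ0 : 0 ≤ φ)
    (hq : LocallyIntegrable q) (hq0 : 0 ≤ q) (hle : ∀ τ, g' τ ≤ φ τ - q τ)
    (hA : Tendsto g atBot (𝓝 A)) (hB : Tendsto g atTop (𝓝 B)) :
    Integrable q ∧ ∫ τ, q τ ≤ A - B + ∫ τ, φ τ := by
  refine integrable_and_integral_le_of_intervalIntegral_le hq hq0 fun a b hab => ?_
  have hlim : Tendsto (fun t => g (-t) - g t + ∫ τ, φ τ) atTop (𝓝 (A - B + ∫ τ, φ τ)) :=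
    ((hA.comp tendsto_neg_atTop_atBot).sub hB).add_const _
  refine ge_of_tendsto hlim ?_
  filter_upwards [eventually_ge_atTop (-a), eventually_ge_atTop b] with t hta htb
  calc ∫ τ in a..b, q τ ≤ ∫ τ in -t..t, q τ :=
        intervalIntegral.integral_mono_interval (by linarith) hab htb
          (Eventually.of_forall hq0) (hq.integrableOn_isCompact isCompact_uIcc).intervalIntegrable
    _ ≤ g (-t) - g t + ∫ τ, φ τ :=
        intervalIntegral_le_sub_add_integral_of_hasDerivAt_le hg hφ hφ0 hq hle (by linarith)

end DerivBound

theorem energy_bound_perturbed_gradient_flow_general {E : Type*} [NormedAddCommGroup E]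
    [InnerProductSpace ℝ E]
    (𝒜 : E → ℝ) (h𝒜 : Differentiable ℝ 𝒜)
    (ε w : ℝ)
    (P : ℝ → E → E)
    (hP0 : ∀ τ : ℝ, τ ∉ Set.Icc (0 : ℝ) 1 → ∀ x : E, P τ x = 0)
    (hPb : ∀ τ : ℝ, ∀ x : E, ‖P τ x‖ ≤ ε)
    (u : ℝ → E) (hu : Differentiable ℝ u) (hu' : Continuous (deriv u))
    (hflow : ∀ τ : ℝ, ∀ v : E,
      fderiv ℝ 𝒜 (u τ) v = (inner ℝ (P τ (u τ) - deriv u τ) v : ℝ))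
    (pminus pplus : E)
    (hminus : Tendsto u atBot (nhds pminus)) (hplus : Tendsto u atTop (nhds pplus))
    (hw : 𝒜 pminus - 𝒜 pplus ≤ w) :
    Integrable (fun τ : ℝ => ‖deriv u τ‖ ^ 2) ∧
      (∫ τ : ℝ, ‖deriv u τ‖ ^ 2) ≤ (4 / 3) * (w + ε ^ 2) := by
  set φ : ℝ → ℝ := (Icc 0 1).indicator fun _ => ε ^ 2
  have hφ : Integrable φ := (integrableOn_const (by simp)).integrable_indicator measurableSet_Icc
  have hφ0 : 0 ≤ φ := indicator_nonneg fun _ _ => sq_nonneg ε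
  have hφint : ∫ τ, φ τ = ε ^ 2 := by simp [φ, integral_indicator_const _ measurableSet_Icc]
  have hPφ (τ : ℝ) : ‖P τ (u τ)‖ ^ 2 ≤ φ τ := by
    by_cases hτ : τ ∈ Icc (0 : ℝ) 1
    · simpa [φ, indicator_of_mem hτ] using pow_le_pow_left₀ (norm_nonneg _) (hPb τ (u τ)) 2
    · simp [φ, indicator_of_notMem hτ, hP0 τ hτ]
  have hderiv (τ : ℝ) : HasDerivAt (fun t => 𝒜 (u t))
      (inner ℝ (P τ (u τ) - deriv u τ) (deriv u τ)) τ := by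
    have h := (h𝒜 (u τ)).hasFDerivAt.comp_hasDerivAt τ (hu τ).hasDerivAt
    rwa [hflow] at h
  obtain ⟨hint, hle⟩ := integrable_and_integral_le_of_hasDerivAt_le
    (q := fun τ => 3 / 4 * ‖deriv u τ‖ ^ 2) hderiv hφ hφ0
    (hu'.norm.pow 2 |>.const_mul _).locallyIntegrable (fun τ => by positivity)
    (fun τ => (real_inner_sub_self_le _ _).trans (by linarith [hPφ τ]))
    ((h𝒜 pminus).continuousAt.tendsto.comp hminus) ((h𝒜 pplus).continuousAt.tendsto.comp hplus)
  rw [integral_const_mul, hφint] at hle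
  refine ⟨(integrable_const_mul_iff (by norm_num : IsUnit (3 / 4 : ℝ)) _).1 hint, ?_⟩
  linarith

/-- Hilbert-space model of the a priori energy bound for the continuation (chain map)
equation: a negative gradient flow line of `𝒜` perturbed by a term `P` vanishing outside
`τ ∈ [0,1]` and bounded by `ε`, connecting limit points whose action difference is at most
`w`, has energy `∫ ‖u'‖²` at most `(4/3)(w + ε²)`. -/
theorem energy_bound_perturbed_gradient_flow {E : Type*} [NormedAddCommGroup E]
    [InnerProductSpace ℝ E]
    (𝒜 : E → ℝ) (h𝒜 : Differentiable ℝ 𝒜)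
    (ε w : ℝ) (hε : 0 ≤ ε)
    (P : ℝ → E → E)
    (hP0 : ∀ τ : ℝ, τ ∉ Set.Icc (0 : ℝ) 1 → ∀ x : E, P τ x = 0)
    (hPb : ∀ τ : ℝ, ∀ x : E, ‖P τ x‖ ≤ ε)
    (u : ℝ → E) (hu : Differentiable ℝ u) (hu' : Continuous (deriv u))
    (hflow : ∀ τ : ℝ, ∀ v : E,
      fderiv ℝ 𝒜 (u τ) v = (inner ℝ (P τ (u τ) - deriv u τ) v : ℝ))
    (pminus pplus : E)
    (hminus : Tendsto u atBot (nhds pminus)) (hplus : Tendsto u atTop (nhds pplus))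
    (hw : 𝒜 pminus - 𝒜 pplus ≤ w) :
    Integrable (fun τ : ℝ => ‖deriv u τ‖ ^ 2) ∧
      (∫ τ : ℝ, ‖deriv u τ‖ ^ 2) ≤ (4 / 3) * (w + ε ^ 2) :=
  energy_bound_perturbed_gradient_flow_general 𝒜 h𝒜 ε w P hP0 hPb u hu hu' hflow pminus pplus hminus
    hplus hw
end
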